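/- arXiv:2307.15805 — 2 statements merged into one kernel-verified Lean document; each statement's English description precedes it below -/
import Mathlib

section
/- Let Φ be the standard normal CDF. The function y ↦ 1 − Φ(y) − yΦ'(y) has a unique zero y* on (0, ∞); moreover it is strictly positive on (0, y*) and strictly negative on (y*, ∞). -/
/-
The standard normal density `φ = Φ'` gives `f(y) = 1 - Φ(y) - y φ(y)` the derivative
`(y² - 2) φ(y)`, so `f` decreases on `[0, √2]` and increases on `[√2, ∞)`.
Since `f(0) = 1 - Φ(0) > 0` and `f(y) → 0` as `y → ∞`, `f` is negative on all of `[√2, ∞)`,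
and its only sign change is the unique zero in `(0, √2)`.
-/

open Real

noncomputable def stdPhi (x : ℝ) : ℝ := ∫ t in Set.Iic x, Real.exp (-t^2/2) / Real.sqrt (2*Real.pi)

noncomputable def stdPhi' (x : ℝ) : ℝ := Real.exp (-x^2/2) / Real.sqrt (2*Real.pi)

open MeasureTheory Filter Set Topology ProbabilityTheory

section IntegralIic

variable {E : Type*} [NormedAddCommGroup E] [NormedSpace ℝ E] {f : ℝ → E}

theorem hasDerivAt_integral_Iic [CompleteSpace E] (hf : Integrable f) (hc : Continuous f)
    (x : ℝ) :
    HasDerivAt (fun u => ∫ t in Iic u, f t) (f x) x := by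
  have hsplit :
      (fun u => ∫ t in Iic u, f t) = fun u => (∫ t in Iic 0, f t) + ∫ t in 0..u, f t := by
    funext u
    rw [← intervalIntegral.integral_Iic_sub_Iic hf.integrableOn hf.integrableOn, add_sub_cancel]
  rw [hsplit]
  exact (intervalIntegral.integral_hasDerivAt_right hf.intervalIntegrable
    hc.aestronglyMeasurable.stronglyMeasurableAtFilter hc.continuousAt).const_add _

theorem tendsto_integral_Iic_atTop (hf : Integrable f) :
    Tendsto (fun u => ∫ t in Iic u, f t) atTop (𝓝 (∫ t, f t)) := by
  have h := tendsto_setIntegral_of_monotone (μ := volume) (s := fun u : ℝ => Iic u)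
    (fun _ => measurableSet_Iic) (fun _ _ => Iic_subset_Iic.mpr)
    (by rw [iUnion_Iic]; exact hf.integrableOn)
  rwa [iUnion_Iic, setIntegral_univ] at h

end IntegralIic

theorem StrictMonoOn.lt_of_tendsto_atTop {f : ℝ → ℝ} {a l : ℝ} (hf : StrictMonoOn f (Ici a))
    (hl : Tendsto f atTop (𝓝 l)) {x : ℝ} (hx : a ≤ x) : f x < l := by
  have hle : f (x + 1) ≤ l := ge_of_tendsto hl <| eventually_atTop.mpr
    ⟨x + 1, fun z hz =>
      hf.monotoneOn (mem_Ici.mpr (by linarith)) (mem_Ici.mpr (by linarith)) hz⟩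
  exact (hf hx (mem_Ici.mpr (by linarith)) (lt_add_one x)).trans_le hle

theorem exists_unique_zero_of_strictAntiOn_of_neg {f : ℝ → ℝ} {a c : ℝ}
    (hcont : ContinuousOn f (Icc a c)) (hanti : StrictAntiOn f (Icc a c)) (ha : 0 < f a)
    (hneg : ∀ y, c ≤ y → f y < 0) :
    ∃ z, a < z ∧ f z = 0 ∧ (∀ y, a < y → f y = 0 → y = z) ∧
      (∀ y, a < y → y < z → 0 < f y) ∧ (∀ y, z < y → f y < 0) := by
  have hac : a ≤ c := le_of_not_ge fun hca => (hneg a hca).not_gt ha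
  obtain ⟨z, ⟨haz, hzc⟩, hz⟩ :=
    intermediate_value_Icc' hac hcont ⟨(hneg c le_rfl).le, ha.le⟩
  have haz : a < z := haz.lt_of_ne (by rintro rfl; exact ha.ne' hz)
  have hzc : z < c := hzc.lt_of_ne (by rintro rfl; exact (hneg z le_rfl).ne hz)
  have hpos : ∀ y, a < y → y < z → 0 < f y := fun y hay hyz =>
    hz ▸ hanti ⟨hay.le, by linarith⟩ ⟨haz.le, hzc.le⟩ hyz
  have hneg' : ∀ y, z < y → f y < 0 := fun y hzy => by
    rcases le_or_gt c y with hcy | hyc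
    · exact hneg y hcy
    · exact hz ▸ hanti ⟨haz.le, hzc.le⟩ ⟨by linarith, hyc.le⟩ hzy
  refine ⟨z, haz, hz, fun y hay hy => ?_, hpos, hneg'⟩
  rcases lt_trichotomy y z with hyz | rfl | hzy
  · exact absurd hy (hpos y hay hyz).ne'
  · rfl
  · exact absurd hy (hneg' y hzy).ne

lemma stdPhi'_eq_gaussianPDFReal : stdPhi' = gaussianPDFReal 0 1 := by
  funext x
  simp [stdPhi', gaussianPDFReal, div_eq_inv_mul]

lemma stdPhi'_pos (x : ℝ) : 0 < stdPhi' x := by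
  unfold stdPhi'
  positivity

lemma continuous_stdPhi' : Continuous stdPhi' := by
  unfold stdPhi'
  fun_prop

lemma integrable_stdPhi' : Integrable stdPhi' :=
  stdPhi'_eq_gaussianPDFReal ▸ integrable_gaussianPDFReal 0 1

lemma integral_stdPhi' : ∫ x, stdPhi' x = 1 :=
  stdPhi'_eq_gaussianPDFReal ▸ integral_gaussianPDFReal_eq_one 0 one_ne_zero

lemma hasDerivAt_stdPhi' (x : ℝ) : HasDerivAt stdPhi' (-x * stdPhi' x) x := by
  have hexp : HasDerivAt (fun y : ℝ => -y ^ 2 / 2) (-x) x :=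
    ((hasDerivAt_pow 2 x).neg.div_const 2).congr_deriv (by ring)
  exact (hexp.exp.div_const (√(2 * π))).congr_deriv (by simp only [stdPhi']; ring)

lemma hasDerivAt_stdPhi (x : ℝ) : HasDerivAt stdPhi (stdPhi' x) x :=
  hasDerivAt_integral_Iic integrable_stdPhi' continuous_stdPhi' x

lemma strictMono_stdPhi : StrictMono stdPhi :=
  strictMono_of_hasDerivAt_pos hasDerivAt_stdPhi stdPhi'_pos

lemma tendsto_stdPhi_atTop : Tendsto stdPhi atTop (𝓝 1) :=
  integral_stdPhi' ▸ tendsto_integral_Iic_atTop integrable_stdPhi'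

lemma tendsto_mul_stdPhi'_atTop : Tendsto (fun y => y * stdPhi' y) atTop (𝓝 0) := by
  have h := ((tendsto_rpow_abs_mul_exp_neg_mul_sq_cocompact (by norm_num : (0 : ℝ) < 1 / 2) 1
    ).mono_left atTop_le_cocompact).div_const (√(2 * π))
  rw [zero_div] at h
  refine h.congr' (eventually_ge_atTop 0 |>.mono fun y hy => ?_)
  rw [abs_of_nonneg hy, rpow_one]
  simp only [stdPhi']
  ring_nf

noncomputable def exchangeFoc (y : ℝ) : ℝ := 1 - stdPhi y - y * stdPhi' y

lemma hasDerivAt_exchangeFoc (x : ℝ) : HasDerivAt exchangeFoc ((x ^ 2 - 2) * stdPhi' x) x := by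
  refine (((hasDerivAt_const x 1).sub (hasDerivAt_stdPhi x)).sub
    ((hasDerivAt_id x).mul (hasDerivAt_stdPhi' x))).congr_deriv ?_
  simp only [id]
  ring

lemma continuous_exchangeFoc : Continuous exchangeFoc :=
  continuous_iff_continuousAt.mpr fun x => (hasDerivAt_exchangeFoc x).continuousAt

lemma strictAntiOn_exchangeFoc : StrictAntiOn exchangeFoc (Icc 0 √2) := by
  refine strictAntiOn_of_hasDerivWithinAt_neg (convex_Icc _ _) continuous_exchangeFoc.continuousOn
    (fun x _ => (hasDerivAt_exchangeFoc x).hasDerivWithinAt) fun x hx => ?_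
  rw [interior_Icc] at hx
  have hx2 : x ^ 2 < 2 := (lt_sqrt hx.1.le).mp hx.2
  exact mul_neg_of_neg_of_pos (by linarith) (stdPhi'_pos x)

lemma strictMonoOn_exchangeFoc : StrictMonoOn exchangeFoc (Ici √2) := by
  refine strictMonoOn_of_hasDerivWithinAt_pos (convex_Ici _) continuous_exchangeFoc.continuousOn
    (fun x _ => (hasDerivAt_exchangeFoc x).hasDerivWithinAt) fun x hx => ?_
  rw [interior_Ici] at hx
  have hx2 : 2 < x ^ 2 := (sqrt_lt' ((sqrt_nonneg 2).trans_lt hx)).mp hx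
  exact mul_pos (by linarith) (stdPhi'_pos x)

lemma tendsto_exchangeFoc_atTop : Tendsto exchangeFoc atTop (𝓝 0) := by
  have h := ((tendsto_const_nhds (x := (1 : ℝ))).sub tendsto_stdPhi_atTop).sub
    tendsto_mul_stdPhi'_atTop
  rwa [sub_self, sub_zero] at h

lemma exchangeFoc_zero_pos : 0 < exchangeFoc 0 := by
  have h := (strictMono_stdPhi.strictMonoOn (Ici 0)).lt_of_tendsto_atTop tendsto_stdPhi_atTop le_rfl
  simp only [exchangeFoc, zero_mul, sub_zero]
  linarith

/-- The function `y ↦ 1 − Φ(y) − yΦ'(y)` has a unique zero `y*` on `(0,∞)`;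
it is strictly positive on `(0, y*)` and strictly negative on `(y*, ∞)`. -/
theorem unique_zero_exchange_foc :
    ∃ ystar : ℝ, 0 < ystar ∧
      (1 - stdPhi ystar - ystar * stdPhi' ystar = 0) ∧
      (∀ y : ℝ, 0 < y → 1 - stdPhi y - y * stdPhi' y = 0 → y = ystar) ∧
      (∀ y : ℝ, 0 < y → y < ystar → 0 < 1 - stdPhi y - y * stdPhi' y) ∧
      (∀ y : ℝ, ystar < y → 1 - stdPhi y - y * stdPhi' y < 0) :=
  exists_unique_zero_of_strictAntiOn_of_neg continuous_exchangeFoc.continuousOn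
    strictAntiOn_exchangeFoc exchangeFoc_zero_pos
    fun _ hy => strictMonoOn_exchangeFoc.lt_of_tendsto_atTop tendsto_exchangeFoc_atTop hy
end

section
/- Let σ > 0, ρ ∈ (−1, 1) and γ > 0. The function f(x) = ½(1 − Φ(√2 x/(σ√(1−ρ)))) − 2γx has a unique positive root, where Φ is the standard normal CDF. -/
/-! Since `stdPhi` is monotone, `x ↦ ½(1 − Φ(c x)) − 2γx` is strictly decreasing for `c ≥ 0`, and it
is continuous, positive at `0` (where it equals `1/4`) and negative at `1/(2γ)` (as `Φ ≥ 0`).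
The intermediate value theorem gives a root, and strict monotonicity makes it unique. -/

open Real MeasureTheory

lemma integrable_stdGaussianDensity :
    Integrable (fun t : ℝ => exp (-t ^ 2 / 2) / √(2 * π)) := by
  convert (integrable_exp_neg_mul_sq (by norm_num : (0 : ℝ) < 1 / 2)).div_const √(2 * π)
    using 4
  ring

lemma stdGaussianDensity_nonneg (t : ℝ) : 0 ≤ exp (-t ^ 2 / 2) / √(2 * π) := by
  positivity

lemma stdPhi_sub_stdPhi (a b : ℝ) :
    stdPhi b - stdPhi a = ∫ t in a..b, exp (-t ^ 2 / 2) / √(2 * π) :=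
  intervalIntegral.integral_Iic_sub_Iic integrable_stdGaussianDensity.integrableOn
    integrable_stdGaussianDensity.integrableOn

lemma stdPhi_nonneg (x : ℝ) : 0 ≤ stdPhi x :=
  integral_nonneg stdGaussianDensity_nonneg

lemma monotone_stdPhi : Monotone stdPhi := fun a b hab => by
  have := stdPhi_sub_stdPhi a b ▸
    intervalIntegral.integral_nonneg hab fun t _ => stdGaussianDensity_nonneg t
  linarith

@[fun_prop]
lemma continuous_stdPhi : Continuous stdPhi := by
  have h : stdPhi = fun x => stdPhi 0 + ∫ t in (0 : ℝ)..x, exp (-t ^ 2 / 2) / √(2 * π) := by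
    funext x
    linarith [stdPhi_sub_stdPhi 0 x]
  rw [h]
  exact continuous_const.add <| intervalIntegral.continuous_primitive
    (fun _ _ => integrable_stdGaussianDensity.intervalIntegrable) 0

lemma stdPhi_zero : stdPhi 0 = 1 / 2 := by
  have hreflect : stdPhi 0 = ∫ t in Set.Ioi 0, exp (-t ^ 2 / 2) / √(2 * π) := by
    rw [stdPhi, ← neg_zero,
      ← integral_comp_neg_Iic 0 fun t => exp (-t ^ 2 / 2) / √(2 * π)]
    simp only [neg_zero, neg_sq]
  have hhalf : ∫ t in Set.Ioi (0 : ℝ), exp (-t ^ 2 / 2) = √(2 * π) / 2 := by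
    convert integral_gaussian_Ioi (1 / 2) using 4 <;> ring_nf
  rw [hreflect, integral_div, hhalf]
  field_simp

lemma existsUnique_pos_eq_zero_of_strictAnti {f : ℝ → ℝ} (hcont : Continuous f)
    (hanti : StrictAnti f) (h0 : 0 < f 0) {M : ℝ} (hM : f M < 0) :
    ∃! x, 0 < x ∧ f x = 0 := by
  have hMpos : 0 < M := hanti.lt_iff_gt.mp (h0.trans' hM)
  obtain ⟨x, hx, hfx⟩ := intermediate_value_Ioo' hMpos.le hcont.continuousOn ⟨hM, h0⟩
  exact ⟨x, ⟨hx.1, hfx⟩, fun y hy => hanti.injective (hy.2.trans hfx.symm)⟩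

lemma existsUnique_pos_root_half_one_sub_stdPhi {c γ : ℝ} (hc : 0 ≤ c) (hγ : 0 < γ) :
    ∃! x, 0 < x ∧ (1 / 2) * (1 - stdPhi (c * x)) - 2 * γ * x = 0 := by
  refine existsUnique_pos_eq_zero_of_strictAnti (M := 1 / (2 * γ)) (by fun_prop) ?_ ?_ ?_
  · intro a b hab
    have := monotone_stdPhi (mul_le_mul_of_nonneg_left hab.le hc)
    nlinarith
  · norm_num [stdPhi_zero]
  · have := stdPhi_nonneg (c * (1 / (2 * γ)))
    have : 2 * γ * (1 / (2 * γ)) = 1 := by field_simp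
    linarith

theorem unique_positive_root_NE_general (σ ρ γ : ℝ) (hσ : 0 < σ)
    (hγ : 0 < γ) :
    ∃! x : ℝ, 0 < x ∧
      (1/2) * (1 - stdPhi (Real.sqrt 2 * x / (σ * Real.sqrt (1 - ρ)))) - 2 * γ * x = 0 := by
  have hc : 0 ≤ √2 / (σ * √(1 - ρ)) := by positivity
  simpa only [mul_div_right_comm √2] using existsUnique_pos_root_half_one_sub_stdPhi hc hγ

/-- For `σ > 0`, `ρ ∈ (−1,1)`, `γ > 0`, the function
`f(x) = ½(1 − Φ(√2 x/(σ√(1−ρ)))) − 2γx` has a unique positive root. -/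
theorem unique_positive_root_NE (σ ρ γ : ℝ) (hσ : 0 < σ) (hρ : ρ ∈ Set.Ioo (-1 : ℝ) 1)
    (hγ : 0 < γ) :
    ∃! x : ℝ, 0 < x ∧
      (1/2) * (1 - stdPhi (Real.sqrt 2 * x / (σ * Real.sqrt (1 - ρ)))) - 2 * γ * x = 0 :=
  unique_positive_root_NE_general σ ρ γ hσ hγ
end
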